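/- arXiv:1212.2314 — 2 statements merged into one kernel-verified Lean document; each statement's English description precedes it below -/
import Mathlib

section
/- A pair of hypergraphs (H1,H2) with H1 ≤ H2 has a tree projection if, and only if, it has a minimal tree projection. -/
/-- A hypergraph, identified (as in the paper) with its finite set of
finite hyperedges; its nodes are the vertices occurring in some hyperedge. -/
structure Hypergraph' (α : Type*) where
  edges : Finset (Finset α)

namespace Hypergraph'

variable {α : Type*}

/-- The set of nodes of a hypergraph. -/
def nodes (H : Hypergraph' α) : Set α := {x | ∃ h ∈ H.edges, x ∈ h}

/-- `H1 ≤ H2`: every hyperedge of `H1` is contained in some hyperedge of `H2`. -/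
def HLe (H1 H2 : Hypergraph' α) : Prop := ∀ h1 ∈ H1.edges, ∃ h2 ∈ H2.edges, h1 ⊆ h2

/-- `H` is contained in `H'`. -/
def Contained (H H' : Hypergraph' α) : Prop :=
  ∀ h ∈ H.edges, h ∉ H'.edges → ∃ h' ∈ H'.edges, h' ∉ H.edges ∧ h ⊆ h'

/-- `H` is properly contained in `H'`. -/
def ProperlyContained (H H' : Hypergraph' α) : Prop := H.Contained H' ∧ H ≠ H'

/-- A hypergraph is reduced if no hyperedge is a proper subset of another one. -/
def Reduced (H : Hypergraph' α) : Prop := ∀ h ∈ H.edges, ∀ h' ∈ H.edges, ¬ h ⊂ h'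

end Hypergraph'

/-- The type of hyperedges of `H`. -/
abbrev Hyperedge {α : Type*} (H : Hypergraph' α) := {h : Finset α // h ∈ H.edges}

/-- A join tree for a hypergraph `H`: a tree whose vertices are the hyperedges of `H`
such that, for every node `X`, the hyperedges containing `X` induce a connected subtree. -/
structure JoinTree {α : Type*} (H : Hypergraph' α) where
  T : SimpleGraph (Hyperedge H)
  isTree : T.IsTree
  node_connected : ∀ X : α, (T.induce {h : Hyperedge H | X ∈ h.1}).Preconnected

/-- A hypergraph is acyclic iff it has a join tree. -/
def Hypergraph'.Acyclic {α : Type*} (H : Hypergraph' α) : Prop := Nonempty (JoinTree H)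

/-- `Ha` is a tree projection of `H1` w.r.t. `H2`. -/
def IsTreeProjection {α : Type*} (H1 H2 Ha : Hypergraph' α) : Prop :=
  Ha.Acyclic ∧ H1.HLe Ha ∧ Ha.HLe H2

/-- `Ha` is a minimal tree projection of `H1` w.r.t. `H2`. -/
def IsMinimalTreeProjection {α : Type*} (H1 H2 Ha : Hypergraph' α) : Prop :=
  IsTreeProjection H1 H2 Ha ∧
  ∀ Ha' : Hypergraph' α, IsTreeProjection H1 H2 Ha' → ¬ Ha'.ProperlyContained Ha

namespace Hypergraph'

variable {α : Type*}

/-- `X` is `[V]`-adjacent to `Y`: some hyperedge contains both outside of `V`. -/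
def Adj (H : Hypergraph' α) (V : Set α) (X Y : α) : Prop :=
  ∃ h ∈ H.edges, X ∈ h ∧ Y ∈ h ∧ X ∉ V ∧ Y ∉ V

/-- There is a `[V]`-path from `X` to `Y`. -/
def VPath (H : Hypergraph' α) (V : Set α) : α → α → Prop :=
  Relation.ReflTransGen (H.Adj V)

/-- The set `W` is `[V]`-connected. -/
def VConnected (H : Hypergraph' α) (V W : Set α) : Prop :=
  ∀ X ∈ W, ∀ Y ∈ W, H.VPath V X Y

/-- `C` is a `[V]`-component of `H`: a maximal `[V]`-connected nonempty subset
of `nodes(H) \ V`. -/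
def IsComponent (H : Hypergraph' α) (V C : Set α) : Prop :=
  C.Nonempty ∧ C ⊆ H.nodes \ V ∧ H.VConnected V C ∧
  ∀ C' : Set α, C ⊆ C' → C' ⊆ H.nodes \ V → H.VConnected V C' → C' = C

/-- The frontier `Fr(C,H)`: the union of all hyperedges meeting `C`. -/
def Fr (H : Hypergraph' α) (C : Set α) : Set α :=
  {x | ∃ h ∈ H.edges, x ∈ h ∧ ∃ y ∈ C, y ∈ h}

/-- The border `∂(C,H) = Fr(C,H) \ C`. -/
def border (H : Hypergraph' α) (C : Set α) : Set α := H.Fr C \ C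

/-- `X` `[V]`-touches the set `W`: `X` is `[∅]`-adjacent to some node `Z` from which
there is a `[V]`-path to some node of `W`. -/
def Touches (H : Hypergraph' α) (V : Set α) (X : α) (W : Set α) : Prop :=
  ∃ Z : α, H.Adj ∅ X Z ∧ ∃ Y ∈ W, H.VPath V Z Y

end Hypergraph'

namespace JoinTree

variable {α : Type*} {H : Hypergraph' α}

/-- The vertices of the subtree rooted at `h_s` when the join tree is rooted at
(the side of) `h_r`, for adjacent vertices `h_r`, `h_s`. -/
def subtreeVerts (JT : JoinTree H) (h_r h_s : Hyperedge H) : Set (Hyperedge H) :=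
  {v | JT.T.dist v h_s < JT.T.dist v h_r}

/-- The nodes occurring in the vertices of the subtree rooted at `h_s` (w.r.t. `h_r`). -/
def subtreeNodes (JT : JoinTree H) (h_r h_s : Hyperedge H) : Set α :=
  {x | ∃ v ∈ JT.subtreeVerts h_r h_s, x ∈ v.1}

/-- `h_s` is a child of `h_r` in the join tree rooted at `root`. -/
def IsChild (JT : JoinTree H) (root h_r h_s : Hyperedge H) : Prop :=
  JT.T.Adj h_r h_s ∧ JT.T.dist root h_r < JT.T.dist root h_s

end JoinTree

/-- The sub-hypergraph of `H1` induced by the node set `N` is `[∅]`-connected. -/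
def InducedConn {α : Type*} (H1 : Hypergraph' α) (N : Set α) : Prop :=
  ∀ X ∈ N, ∀ Y ∈ N,
    Relation.ReflTransGen
      (fun a b => a ∈ N ∧ b ∈ N ∧ ∃ h ∈ H1.edges, a ∈ h ∧ b ∈ h) X Y

/-- A join tree of `Ha` is `H1`-connected. -/
def JoinTree.IsConnectedFor {α : Type*} {Ha : Hypergraph' α} (JT : JoinTree Ha)
    (H1 : Hypergraph' α) : Prop :=
  ∀ h_r h_s : Hyperedge Ha, JT.T.Adj h_r h_s → InducedConn H1 (JT.subtreeNodes h_r h_s)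

/-- `C` is the component `C⊤(h)` associated with vertex `h` of the join tree rooted at
`root`: conventionally `nodes(H1)` for the root, and otherwise the unique
`[h_p]`-component of `H1` (for `h_p` the parent of `h`) determined by the subtree at `h`. -/
def CtopAt {α : Type*} (H1 : Hypergraph' α) {Ha : Hypergraph' α} (JT : JoinTree Ha)
    (root h : Hyperedge Ha) (C : Set α) : Prop :=
  (h = root ∧ C = H1.nodes) ∨
  ∃ h_p : Hyperedge Ha, JT.IsChild root h_p h ∧ H1.IsComponent (h_p.1 : Set α) C ∧
    JT.subtreeNodes h_p h = C ∪ ((h.1 : Set α) ∩ (h_p.1 : Set α))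

/-- The join tree `JT` of `Ha`, rooted at `root`, is an `H1`-component tree. -/
def JoinTree.IsComponentTreeFor {α : Type*} {Ha : Hypergraph' α} (JT : JoinTree Ha)
    (H1 : Hypergraph' α) (root : Hyperedge Ha) : Prop :=
  (∀ h_r h_s : Hyperedge Ha, JT.IsChild root h_r h_s →
    (∃! C : Set α, H1.IsComponent (h_r.1 : Set α) C ∧
      JT.subtreeNodes h_r h_s = C ∪ ((h_s.1 : Set α) ∩ (h_r.1 : Set α))) ∧
    (∀ C : Set α, H1.IsComponent (h_r.1 : Set α) C →
      JT.subtreeNodes h_r h_s = C ∪ ((h_s.1 : Set α) ∩ (h_r.1 : Set α)) →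
      ((h_s.1 : Set α) ∩ C).Nonempty ∧ (h_s.1 : Set α) ⊆ H1.Fr C)) ∧
  (∀ h_r : Hyperedge Ha, ∀ Ctop : Set α, CtopAt H1 JT root h_r Ctop →
    ∀ C_r : Set α, H1.IsComponent (h_r.1 : Set α) C_r → C_r ⊆ Ctop →
    ∃! h_s : Hyperedge Ha, JT.IsChild root h_r h_s ∧
      JT.subtreeNodes h_r h_s = C_r ∪ ((h_s.1 : Set α) ∩ (h_r.1 : Set α)))

/-! ### The Robber and Captain game -/

/-- A position for the Captain: a set of nodes included in some hyperedge of `H2`. -/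
def IsPosition {α : Type*} (H2 : Hypergraph' α) (M : Set α) : Prop :=
  ∃ h2 ∈ H2.edges, M ⊆ (h2 : Set α)

/-- A configuration of the game `R&C(H1,H2)`. -/
def IsConfig {α : Type*} (H1 H2 : Hypergraph' α) (M C : Set α) : Prop :=
  IsPosition H2 M ∧ (H1.IsComponent M C ∨ C = ∅ ∨ (M = ∅ ∧ C = H1.nodes))

/-- `C_j` is an `[(M_i,C_i),M_j]`-escape component: an `[M_j]`-component of `H1`
such that `C_i ∪ C_j` is `[M_i ∩ M_j]`-connected. -/
def EscapeComp {α : Type*} (H1 : Hypergraph' α) (M_i C_i M_j C_j : Set α) : Prop :=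
  H1.IsComponent M_j C_j ∧ H1.VConnected (M_i ∩ M_j) (C_i ∪ C_j)

/-- The escape door `ED((M_i,C),M') = ∂(C,H1) \ M'` (it only depends on `C` and `M'`). -/
def escapeDoor {α : Type*} (H1 : Hypergraph' α) (C M' : Set α) : Set α :=
  H1.border C \ M'

/-- `σ` is a strategy for the Captain in `R&C(H1,H2)`. -/
def IsStrategy {α : Type*} (H1 H2 : Hypergraph' α) (σ : Set α → Set α → Set α) : Prop :=
  ∀ M C : Set α, IsConfig H1 H2 M C → C ≠ ∅ →
    IsPosition H2 (σ M C) ∧ σ M C ⊆ H1.Fr C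

/-- One step of the game played according to `σ`: from configuration `p` the Captain
moves to `σ p.1 p.2`, and the Robber either selects an escape component or is captured. -/
def GameStep {α : Type*} (H1 : Hypergraph' α) (σ : Set α → Set α → Set α)
    (p q : Set α × Set α) : Prop :=
  p.2 ≠ ∅ ∧ q.1 = σ p.1 p.2 ∧
    (EscapeComp H1 p.1 p.2 q.1 q.2 ∨
      ((∀ C : Set α, ¬ EscapeComp H1 p.1 p.2 q.1 C) ∧ q.2 = ∅))

/-- `p` is a vertex of the game tree `T(σ)` (reachable from the root `(∅, nodes(H1))`). -/
def InGameTree {α : Type*} (H1 : Hypergraph' α) (σ : Set α → Set α → Set α)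
    (p : Set α × Set α) : Prop :=
  Relation.ReflTransGen (GameStep H1 σ) (∅, H1.nodes) p

/-- `σ` is winning: the game tree `T(σ)` is finite, i.e., there is no infinite play. -/
def Winning {α : Type*} (H1 : Hypergraph' α) (σ : Set α → Set α → Set α) : Prop :=
  ¬ ∃ f : ℕ → Set α × Set α, f 0 = (∅, H1.nodes) ∧ ∀ n, GameStep H1 σ (f n) (f (n + 1))

/-- `M_j` is a monotone move in `(M_i, C_i)`. -/
def MonotoneMove {α : Type*} (H1 : Hypergraph' α) (M_i C_i M_j : Set α) : Prop :=
  ∀ C : Set α, EscapeComp H1 M_i C_i M_j C → C ⊆ C_i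

/-- `σ` is a monotone strategy. -/
def MonotoneStrategy {α : Type*} (H1 : Hypergraph' α) (σ : Set α → Set α → Set α) : Prop :=
  ∀ p q : Set α × Set α, InGameTree H1 σ p → GameStep H1 σ p q →
    MonotoneMove H1 p.1 p.2 q.1


/-!
Proper containment of hypergraphs is an instance of the Dershowitz–Manna multiset ordering on
their edge sets, over the well-founded order `⊂` on finite sets of nodes. That ordering is
well-founded, so every nonempty family of hypergraphs has an element properly containing none
of the others.
-/

theorem Finset.isDershowitzMannaLT_val {β : Type*} [Preorder β] [DecidableEq β]
    {s t : Finset β} (hne : s ≠ t) (hlt : ∀ a ∈ s \ t, ∃ b ∈ t \ s, a < b) :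
    Multiset.IsDershowitzMannaLT s.val t.val := by
  have hnew : (t \ s).Nonempty := by
    by_contra hempty
    have hts : t ⊆ s :=
      Finset.sdiff_eq_empty_iff_subset.1 (Finset.not_nonempty_iff_eq_empty.1 hempty)
    have hst : s ⊆ t := fun a ha => by
      by_contra hat
      obtain ⟨b, hb, -⟩ := hlt a (Finset.mem_sdiff.2 ⟨ha, hat⟩)
      exact hempty ⟨b, hb⟩
    exact hne (hst.antisymm hts)
  refine ⟨(s ∩ t).val, (s \ t).val, (t \ s).val, ?_, ?_, ?_, hlt⟩
  · simpa [← Finset.val_eq_zero] using hnew.ne_empty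
  · rw [Finset.inter_val, Finset.sdiff_val, add_comm, Multiset.sub_add_inter]
  · rw [Finset.inter_comm, Finset.inter_val, Finset.sdiff_val, add_comm, Multiset.sub_add_inter]

namespace Hypergraph'

variable {α : Type*}

theorem ext_edges {H H' : Hypergraph' α} (h : H.edges = H'.edges) : H = H' := by
  cases H
  cases H'
  congr

theorem ProperlyContained.isDershowitzMannaLT {H H' : Hypergraph' α}
    (hHH' : H.ProperlyContained H') :
    Multiset.IsDershowitzMannaLT H.edges.val H'.edges.val := by
  classical
  refine Finset.isDershowitzMannaLT_val (fun h => hHH'.2 (ext_edges h)) fun h hh => ?_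
  rw [Finset.mem_sdiff] at hh
  obtain ⟨h', hh', hh'H, hsub⟩ := hHH'.1 h hh.1 hh.2
  exact ⟨h', Finset.mem_sdiff.2 ⟨hh', hh'H⟩, hsub.lt_of_ne (by rintro rfl; exact hh'H hh.1)⟩

theorem wellFounded_properlyContained :
    WellFounded (fun H H' : Hypergraph' α => H.ProperlyContained H') :=
  Subrelation.wf (fun h => h.isDershowitzMannaLT)
    (InvImage.wf (fun H : Hypergraph' α => H.edges.val) Multiset.wellFounded_isDershowitzMannaLT)

end Hypergraph'

theorem exists_tp_iff_exists_minimal_tp_general {α : Type*} (H1 H2 : Hypergraph' α) :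
    (∃ Ha : Hypergraph' α, IsTreeProjection H1 H2 Ha) ↔
      (∃ Ha : Hypergraph' α, IsMinimalTreeProjection H1 H2 Ha) := by
  refine ⟨fun hTP => ?_, fun ⟨Ha, hmin⟩ => ⟨Ha, hmin.1⟩⟩
  obtain ⟨Ha, hTPa, hmin⟩ := Hypergraph'.wellFounded_properlyContained.has_min
    {Ha | IsTreeProjection H1 H2 Ha} hTP
  exact ⟨Ha, hTPa, fun Ha' hTP' => hmin Ha' hTP'⟩

theorem exists_tp_iff_exists_minimal_tp {α : Type*} (H1 H2 : Hypergraph' α)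
    (hle : H1.HLe H2) :
    (∃ Ha : Hypergraph' α, IsTreeProjection H1 H2 Ha) ↔
      (∃ Ha : Hypergraph' α, IsMinimalTreeProjection H1 H2 Ha) :=
  exists_tp_iff_exists_minimal_tp_general H1 H2
end

section
/- Every minimal tree projection is a reduced hypergraph, i.e., no hyperedge of a minimal tree projection is a proper subset of another of its hyperedges. -/
/-!
If `e ⊊ e'` are hyperedges of the acyclic hypergraph `Ha`, then the neighbour of `e` on the
join-tree path from `e` to `e'` contains `e`, because the hyperedges containing a fixed node
form a subtree. Contracting this tree edge gives a join tree of `Ha` without `e`. Removing `e`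
keeps a tree projection (`e` is covered by `e'`), and the result is properly contained in `Ha`,
contradicting minimality.
-/

namespace SimpleGraph

variable {V W : Type*} {G : SimpleGraph V}

lemma Reachable.map_of_adj {G' : SimpleGraph W} {φ : V → W}
    (hφ : ∀ u v, G.Adj u v → φ u = φ v ∨ G'.Adj (φ u) (φ v)) {u v : V}
    (h : G.Reachable u v) : G'.Reachable (φ u) (φ v) := by
  rw [reachable_iff_reflTransGen] at h ⊢
  refine h.lift' φ fun a b hab => ?_
  show Relation.ReflTransGen G'.Adj (φ a) (φ b)
  rcases hφ a b hab with heq | hadj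
  · rw [heq]
  · exact .single hadj

lemma IsAcyclic.support_subset_of_preconnected_induce (hG : G.IsAcyclic) {s : Set V}
    (hs : (G.induce s).Preconnected) {u v : V} (hu : u ∈ s) (hv : v ∈ s)
    (p : G.Walk u v) (hp : p.IsPath) : ∀ x ∈ p.support, x ∈ s := by
  classical
  obtain ⟨q⟩ := hs ⟨u, hu⟩ ⟨v, hv⟩
  let q' := q.map (Embedding.induce s).toHom
  have hpq : p = q'.bypass := congrArg Subtype.val
    ((hG.subsingleton_path u v).elim ⟨p, hp⟩ ⟨q'.bypass, q'.bypass_isPath⟩)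
  intro x hx
  rw [hpq] at hx
  have hx' := q'.support_bypass_subset_support hx
  rw [Walk.support_map] at hx'
  obtain ⟨y, -, rfl⟩ := List.mem_map.1 hx'
  exact y.2

/-- Surjectivity and the cardinality condition say that `φ` identifies exactly the ends of
the edge `a b`, so the image graph is the contraction of that edge. -/
lemma IsTree.fromEdgeSet_image [Finite V] (hG : G.IsTree) {φ : V → W}
    (hφ : Function.Surjective φ) {a b : V} (hab : G.Adj a b) (hφab : φ a = φ b)
    (hcard : Nat.card W + 1 = Nat.card V) :
    (fromEdgeSet (Sym2.map φ '' G.edgeSet)).IsTree := by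
  have : Finite W := Finite.of_surjective φ hφ
  set G' := fromEdgeSet (Sym2.map φ '' G.edgeSet)
  have hconn : G'.Connected := by
    have : Nonempty W := hG.1.nonempty.map φ
    refine Connected.mk fun w w' => ?_
    obtain ⟨u, rfl⟩ := hφ w
    obtain ⟨u', rfl⟩ := hφ w'
    refine (hG.1 u u').map_of_adj fun x y hxy => ?_
    by_cases hxy' : φ x = φ y
    · exact Or.inl hxy'
    · exact Or.inr ((fromEdgeSet_adj _).2 ⟨⟨s(x, y), hxy, rfl⟩, hxy'⟩)
  have hsub : G'.edgeSet ⊆ Sym2.map φ '' (G.edgeSet \ {s(a, b)}) := by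
    rw [edgeSet_fromEdgeSet]
    rintro _ ⟨⟨e, he, rfl⟩, hdiag⟩
    refine ⟨e, ⟨he, fun hab' => hdiag ?_⟩, rfl⟩
    rw [Set.mem_singleton_iff.1 hab']
    simp [hφab]
  have hle : Nat.card G'.edgeSet + 1 ≤ Nat.card G.edgeSet := by
    have hmem : s(a, b) ∈ G.edgeSet := hab
    simp only [Nat.card_coe_set_eq]
    calc G'.edgeSet.ncard + 1 ≤ (G.edgeSet \ {s(a, b)}).ncard + 1 := by
          gcongr
          exact (Set.ncard_le_ncard hsub (Set.toFinite _)).trans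
            (Set.ncard_image_le (Set.toFinite _))
      _ = G.edgeSet.ncard := Set.ncard_sdiff_singleton_add_one hmem
  have hV := (isTree_iff_connected_and_card.1 hG).2
  refine isTree_iff_connected_and_card.2
    ⟨hconn, le_antisymm ?_ hconn.card_vert_le_card_edgeSet_add_one⟩
  omega

end SimpleGraph

namespace JoinTree

variable {α : Type*} {H : Hypergraph' α}

lemma exists_adj_subset (JT : JoinTree H) {a c : Hyperedge H} (hac : a ≠ c)
    (hsub : a.1 ⊆ c.1) : ∃ b, JT.T.Adj a b ∧ a.1 ⊆ b.1 := by
  classical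
  obtain ⟨w⟩ := JT.isTree.1 a c
  let p := w.bypass
  refine ⟨p.snd, p.adj_snd (SimpleGraph.Walk.not_nil_of_ne hac), fun X hX => ?_⟩
  exact JT.isTree.2.support_subset_of_preconnected_induce (JT.node_connected X) hX
    (hsub hX) p w.bypass_isPath _ (p.getVert_mem_support 1)

lemma acyclic_erase_of_adj_of_subset [DecidableEq α] (JT : JoinTree H) {a b : Hyperedge H}
    (hab : JT.T.Adj a b) (hsub : a.1 ⊆ b.1) :
    Hypergraph'.Acyclic ⟨H.edges.erase a.1⟩ := by
  have hba : b.1 ≠ a.1 := fun h => hab.ne (Subtype.ext h.symm)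
  let φ : Hyperedge H → Hyperedge ⟨H.edges.erase a.1⟩ := fun v =>
    if hv : v.1 = a.1 then ⟨b.1, Finset.mem_erase.2 ⟨hba, b.2⟩⟩
    else ⟨v.1, Finset.mem_erase.2 ⟨hv, v.2⟩⟩
  have hφ_val (v : Hyperedge H) (hv : v.1 ≠ a.1) :
      φ v = ⟨v.1, Finset.mem_erase.2 ⟨hv, v.2⟩⟩ :=
    dif_neg hv
  have hφ_mem (X : α) (v : Hyperedge H) (hX : X ∈ v.1) : X ∈ (φ v).1 := by
    by_cases hv : v.1 = a.1
    · simp only [φ, dif_pos hv]; exact hsub (hv ▸ hX)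
    · rwa [hφ_val v hv]
  let ι : Hyperedge ⟨H.edges.erase a.1⟩ → Hyperedge H :=
    fun w => ⟨w.1, Finset.mem_of_mem_erase w.2⟩
  have hφι (w : Hyperedge ⟨H.edges.erase a.1⟩) : φ (ι w) = w :=
    hφ_val _ (Finset.ne_of_mem_erase w.2)
  have hcard : Nat.card (Hyperedge ⟨H.edges.erase a.1⟩) + 1 = Nat.card (Hyperedge H) := by
    simp only [Nat.card_eq_fintype_card, Fintype.card_coe]
    exact Finset.card_erase_add_one a.2
  let T' := SimpleGraph.fromEdgeSet (Sym2.map φ '' JT.T.edgeSet)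
  have hT'_adj (u v : Hyperedge H) (huv : JT.T.Adj u v) : φ u = φ v ∨ T'.Adj (φ u) (φ v) := by
    by_cases h : φ u = φ v
    · exact Or.inl h
    · exact Or.inr ((SimpleGraph.fromEdgeSet_adj _).2 ⟨⟨s(u, v), huv, rfl⟩, h⟩)
  refine ⟨{ T := T', isTree := ?_, node_connected := fun X ⟨w, hw⟩ ⟨w', hw'⟩ => ?_ }⟩
  · exact JT.isTree.fromEdgeSet_image (fun w => ⟨ι w, hφι w⟩) hab (by simp [φ]) hcard
  · let ψ (v : {v : Hyperedge H | X ∈ v.1}) :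
        {w : Hyperedge ⟨H.edges.erase a.1⟩ | X ∈ w.1} :=
      ⟨φ v, hφ_mem X v v.2⟩
    have hreach : (T'.induce {w | X ∈ w.1}).Reachable (ψ ⟨ι w, hw⟩) (ψ ⟨ι w', hw'⟩) :=
      (JT.node_connected X _ _).map_of_adj (φ := ψ) fun u v huv =>
        (hT'_adj u v huv).imp Subtype.ext id
    simpa [ψ, hφι] using hreach

end JoinTree

namespace Hypergraph'

variable {α : Type*}

lemma HLe.trans {H1 H2 H3 : Hypergraph' α} (h12 : H1.HLe H2) (h23 : H2.HLe H3) : H1.HLe H3 :=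
  fun h hh => by
    obtain ⟨h', hh', hsub⟩ := h12 h hh
    obtain ⟨h'', hh'', hsub'⟩ := h23 h' hh'
    exact ⟨h'', hh'', hsub.trans hsub'⟩

variable [DecidableEq α] {H : Hypergraph' α} {e : Finset α}

lemma erase_hLe : HLe ⟨H.edges.erase e⟩ H :=
  fun h hh => ⟨h, Finset.mem_of_mem_erase hh, subset_rfl⟩

lemma hLe_erase_of_subset {e' : Finset α} (he' : e' ∈ H.edges) (hne : e ≠ e')
    (hss : e ⊆ e') : H.HLe ⟨H.edges.erase e⟩ := fun h hh => by
  by_cases hhe : h = e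
  · exact ⟨e', Finset.mem_erase.2 ⟨hne.symm, he'⟩, hhe ▸ hss⟩
  · exact ⟨h, Finset.mem_erase.2 ⟨hhe, hh⟩, subset_rfl⟩

lemma erase_properlyContained (he : e ∈ H.edges) : ProperlyContained ⟨H.edges.erase e⟩ H :=
  ⟨fun _ hh hnot => absurd (Finset.mem_of_mem_erase hh) hnot,
    fun heq => Finset.notMem_erase e H.edges (by rw [← heq] at he; exact he)⟩

end Hypergraph'

theorem minimal_tp_reduced {α : Type*} (H1 H2 Ha : Hypergraph' α)
    (hmin : IsMinimalTreeProjection H1 H2 Ha) : Ha.Reduced := by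
  classical
  intro e he e' he' hss
  obtain ⟨⟨⟨JT⟩, h1a, ha2⟩, hmin⟩ := hmin
  have hne : e ≠ e' := hss.ne
  obtain ⟨b, hab, hsub⟩ :=
    JT.exists_adj_subset (a := ⟨e, he⟩) (c := ⟨e', he'⟩) (by simpa using hne) hss.subset
  refine hmin _ ⟨JT.acyclic_erase_of_adj_of_subset hab hsub, ?_, ?_⟩
    (Hypergraph'.erase_properlyContained he)
  · exact h1a.trans (Hypergraph'.hLe_erase_of_subset he' hne hss.subset)
  · exact Hypergraph'.erase_hLe.trans ha2
end
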